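/- arXiv:2202.06629 — 5 statements merged into one kernel-verified Lean document; each statement's English description precedes it below -/
import Mathlib

section
/- Let z = (z₀, z₁) with ‖z₁‖ > α(z₀ - c) and ‖z₁‖ > -α(z₀ - c), and set τ = (α(z₀ - c) + ‖z₁‖)/2. Then the point v* = (τα + c, τ z₁/‖z₁‖) belongs to K_α(c) and is the Euclidean projection of z onto K_α(c). -/
open RealInnerProductSpace

def shiftedSOC (d : ℕ) (α c : ℝ) : Set (ℝ × EuclideanSpace ℝ (Fin d)) :=
  {z | ‖z.2‖ ≤ α * (z.1 - c)}

/-!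
After the change of coordinate `t = α (y₀ - c)`, an isometry of `ℝ` since `α² = 1`, the cone
`K_α(c)` becomes the Lorentz cone `{(t, y) | ‖y‖ ≤ t}`. For `(s, x)` with `|s| < ‖x‖` and
`u = x / ‖x‖`, the candidate projection is `p = τ (1, u)` and the residual is `(s, x) - p = δ (-1, u)`
with `τ = (s + ‖x‖) / 2 ≥ 0` and `δ = (‖x‖ - s) / 2 ≥ 0`. Since `⟪p, (-1, u)⟫ = 0`, the variational
inequality reduces to `δ (⟪y, u⟫ - t) ≤ 0`, which is Cauchy–Schwarz.
-/

section LorentzCone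

variable {E : Type*} [NormedAddCommGroup E] [InnerProductSpace ℝ E]

theorem norm_lorentzProj {s : ℝ} {x : E} (hx : x ≠ 0) (hs : -‖x‖ ≤ s) :
    ‖((s + ‖x‖) / 2 / ‖x‖) • x‖ = (s + ‖x‖) / 2 := by
  have hn : 0 < ‖x‖ := norm_pos_iff.mpr hx
  rw [norm_smul, Real.norm_of_nonneg (div_nonneg (by linarith) hn.le), div_mul_cancel₀ _ hn.ne']

theorem lorentzProj_variational {s t : ℝ} {x y : E} (hx : x ≠ 0) (hs : s ≤ ‖x‖)
    (hy : ‖y‖ ≤ t) :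
    (t - (s + ‖x‖) / 2) * (s - (s + ‖x‖) / 2) +
        ⟪y - ((s + ‖x‖) / 2 / ‖x‖) • x, x - ((s + ‖x‖) / 2 / ‖x‖) • x⟫ ≤ 0 := by
  have hn : 0 < ‖x‖ := norm_pos_iff.mpr hx
  have hresidual : x - ((s + ‖x‖) / 2 / ‖x‖) • x = ((‖x‖ - s) / 2 / ‖x‖) • x := by
    have hcoeff : (‖x‖ - s) / 2 / ‖x‖ = 1 - (s + ‖x‖) / 2 / ‖x‖ := by field_simp; ring
    rw [hcoeff, sub_smul, one_smul]
  have hinner : ⟪y - ((s + ‖x‖) / 2 / ‖x‖) • x, ((‖x‖ - s) / 2 / ‖x‖) • x⟫ =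
      (‖x‖ - s) / 2 * (⟪y, x⟫ / ‖x‖ - (s + ‖x‖) / 2) := by
    rw [inner_sub_left, real_inner_smul_right, real_inner_smul_left, real_inner_smul_right,
      real_inner_self_eq_norm_sq]
    field_simp
  have hcs : ⟪y, x⟫ / ‖x‖ ≤ t := by
    rw [div_le_iff₀ hn]
    exact (real_inner_le_norm y x).trans (mul_le_mul_of_nonneg_right hy hn.le)
  calc (t - (s + ‖x‖) / 2) * (s - (s + ‖x‖) / 2) +
        ⟪y - ((s + ‖x‖) / 2 / ‖x‖) • x, x - ((s + ‖x‖) / 2 / ‖x‖) • x⟫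
      = (‖x‖ - s) / 2 * (⟪y, x⟫ / ‖x‖ - t) := by rw [hresidual, hinner]; ring
    _ ≤ 0 := mul_nonpos_of_nonneg_of_nonpos (by linarith) (by linarith)

end LorentzCone

theorem sub_mul_sub_eq_of_mul_self_eq_one {α c τ : ℝ} (hα : α * α = 1) (a b : ℝ) :
    (a - (τ * α + c)) * (b - (τ * α + c)) = (α * (a - c) - τ) * (α * (b - c) - τ) := by
  linear_combination (τ ^ 2 - (a - c) * (b - c)) * hα

theorem proj_generic_case (d : ℕ) (α c : ℝ) (hα : α = 1 ∨ α = -1)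
    (z₀ : ℝ) (z₁ : EuclideanSpace ℝ (Fin d))
    (h1 : α * (z₀ - c) < ‖z₁‖) (h2 : -α * (z₀ - c) < ‖z₁‖) :
    (((α * (z₀ - c) + ‖z₁‖) / 2 * α + c,
        ((α * (z₀ - c) + ‖z₁‖) / 2 / ‖z₁‖) • z₁) : ℝ × EuclideanSpace ℝ (Fin d)) ∈
      shiftedSOC d α c ∧
    ∀ y ∈ shiftedSOC d α c,
      (y.1 - ((α * (z₀ - c) + ‖z₁‖) / 2 * α + c)) *
          (z₀ - ((α * (z₀ - c) + ‖z₁‖) / 2 * α + c)) +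
        ⟪y.2 - ((α * (z₀ - c) + ‖z₁‖) / 2 / ‖z₁‖) • z₁,
          z₁ - ((α * (z₀ - c) + ‖z₁‖) / 2 / ‖z₁‖) • z₁⟫ ≤ 0 := by
  have hα2 : α * α = 1 := by rcases hα with rfl | rfl <;> norm_num
  have hz₁ : z₁ ≠ 0 := by
    rintro rfl
    rw [norm_zero] at h1 h2
    linarith
  refine ⟨?_, fun y hy => ?_⟩
  · show _ ≤ α * ((α * (z₀ - c) + ‖z₁‖) / 2 * α + c - c)
    rw [norm_lorentzProj hz₁ (by linarith)]
    exact le_of_eq (by linear_combination (-(α * (z₀ - c) + ‖z₁‖) / 2) * hα2)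
  · rw [sub_mul_sub_eq_of_mul_self_eq_one hα2]
    exact lorentzProj_variational hz₁ h1.le hy
end

section
/- (Projection onto D via composition) Let z̲ ≤ z̄ and z ∈ ℝ × ℝ^{n-1}. Then the Euclidean projection of z onto D(z̄, z̲) = K_{-1}(z̄) ∩ K_{+1}(z̲) equals P_{K_{-1}(z̄)}(P_{K_{+1}(z̲)}(z)), the composition of the projection onto K_{+1}(z̲) followed by projection onto K_{-1}(z̄). -/
def setD (d : ℕ) (zub zlb : ℝ) : Set (ℝ × EuclideanSpace ℝ (Fin d)) :=
  shiftedSOC d (-1) zub ∩ shiftedSOC d 1 zlb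

/-- Squared Euclidean distance on `ℝ × ℝ^{n-1}`. -/
noncomputable def sqDist {d : ℕ} (a b : ℝ × EuclideanSpace ℝ (Fin d)) : ℝ :=
  (a.1 - b.1) ^ 2 + ‖a.2 - b.2‖ ^ 2

/-- `v` is the Euclidean projection of `z` onto `C`. -/
def IsProj {d : ℕ} (C : Set (ℝ × EuclideanSpace ℝ (Fin d)))
    (z v : ℝ × EuclideanSpace ℝ (Fin d)) : Prop :=
  v ∈ C ∧ ∀ w ∈ C, sqDist v z ≤ sqDist w z

namespace ProjAux

noncomputable def ip {d : ℕ} (a b : ℝ × EuclideanSpace ℝ (Fin d)) : ℝ :=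
  a.1 * b.1 + (inner ℝ a.2 b.2 : ℝ)

lemma sqDist_eq {d : ℕ} (a b : ℝ × EuclideanSpace ℝ (Fin d)) :
    sqDist a b = ip (a - b) (a - b) := by
  unfold sqDist ip
  rw [real_inner_self_eq_norm_sq]
  simp only [Prod.fst_sub, Prod.snd_sub]
  ring

lemma ip_add_left {d : ℕ} (a b c : ℝ × EuclideanSpace ℝ (Fin d)) :
    ip (a + b) c = ip a c + ip b c := by
  simp [ip, inner_add_left]; ring

lemma ip_comm {d : ℕ} (a b : ℝ × EuclideanSpace ℝ (Fin d)) : ip a b = ip b a := by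
  simp [ip, real_inner_comm, mul_comm]

lemma ip_add_right {d : ℕ} (a b c : ℝ × EuclideanSpace ℝ (Fin d)) :
    ip a (b + c) = ip a b + ip a c := by
  rw [ip_comm, ip_add_left, ip_comm b a, ip_comm c a]

lemma ip_smul_left {d : ℕ} (t : ℝ) (a b : ℝ × EuclideanSpace ℝ (Fin d)) :
    ip (t • a) b = t * ip a b := by
  simp [ip, inner_smul_left]; ring

lemma ip_neg_left {d : ℕ} (a b : ℝ × EuclideanSpace ℝ (Fin d)) :
    ip (-a) b = -ip a b := by
  simp [ip, inner_neg_left]; ring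

lemma ip_self_nonneg {d : ℕ} (a : ℝ × EuclideanSpace ℝ (Fin d)) : 0 ≤ ip a a :=
  add_nonneg (mul_self_nonneg _) real_inner_self_nonneg

lemma sqDist_nonneg {d : ℕ} (a b : ℝ × EuclideanSpace ℝ (Fin d)) : 0 ≤ sqDist a b := by
  rw [sqDist_eq]; exact ip_self_nonneg _

lemma ip_smul_right {d : ℕ} (t : ℝ) (a b : ℝ × EuclideanSpace ℝ (Fin d)) :
    ip a (t • b) = t * ip a b := by
  rw [ip_comm, ip_smul_left, ip_comm]

lemma ip_eq_zero {d : ℕ} {a : ℝ × EuclideanSpace ℝ (Fin d)} (h : ip a a = 0) : a = 0 := by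
  unfold ip at h
  have hA : 0 ≤ a.1 * a.1 := mul_self_nonneg _
  have hB : (0:ℝ) ≤ (inner ℝ a.2 a.2 : ℝ) := real_inner_self_nonneg
  have h2 : a.1 = 0 := by nlinarith
  have h3 : a.2 = 0 := by
    have hz : (inner ℝ a.2 a.2 : ℝ) = 0 := by linarith
    exact inner_self_eq_zero.mp hz
  exact Prod.ext h2 h3

/-- Variational inequality from minimality. -/
lemma vi {d : ℕ} {C : Set (ℝ × EuclideanSpace ℝ (Fin d))} (hC : Convex ℝ C)
    {z v : ℝ × EuclideanSpace ℝ (Fin d)} (h : IsProj C z v)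
    {u : ℝ × EuclideanSpace ℝ (Fin d)} (hu : u ∈ C) : ip (z - v) (u - v) ≤ 0 := by
  by_contra hlt
  push_neg at hlt
  set ε := ip (z - v) (u - v) with hε
  set s := ip (u - v) (u - v) with hs
  have hs0 : 0 ≤ s := ip_self_nonneg _
  have hsne : 0 < s := by
    rcases eq_or_lt_of_le hs0 with h0 | h0
    · exfalso
      have huv : u - v = 0 := ip_eq_zero h0.symm
      have hε0 : ε = 0 := by rw [hε, huv]; simp [ip]
      linarith
    · exact h0
  set t := min 1 (ε / s) with ht
  have ht0 : 0 < t := lt_min one_pos (div_pos hlt hsne)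
  have ht1 : t ≤ 1 := min_le_left _ _
  have hmem : v + t • (u - v) ∈ C := by
    have h2 := hC h.1 hu (by linarith : (0:ℝ) ≤ 1 - t) (le_of_lt ht0) (by ring)
    have : (1 - t) • v + t • u = v + t • (u - v) := by
      rw [smul_sub]; module
    rwa [this] at h2
  have key : sqDist (v + t • (u - v)) z = sqDist v z - 2*t*ε + t^2 * s := by
    have hrw : (v + t • (u - v)) - z = (v - z) + t • (u - v) := by abel
    rw [sqDist_eq, sqDist_eq, hrw, ip_add_left, ip_add_right, ip_add_right,
      ip_smul_left, ip_comm (v - z) (t • (u - v)), ip_smul_left, ip_smul_left, ip_smul_right]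
    have hvz : ip (v - z) (u - v) = -ε := by
      rw [hε, ← ip_neg_left, neg_sub]
    rw [ip_comm (u - v) (v - z), hvz, ← hs]
    ring
  have hts : t * s ≤ ε := by
    calc t * s ≤ (ε/s) * s := mul_le_mul_of_nonneg_right (min_le_right _ _) hs0
    _ = ε := div_mul_cancel₀ _ (ne_of_gt hsne)
  have hlt2 : sqDist (v + t • (u - v)) z < sqDist v z := by
    rw [key]; nlinarith
  exact absurd (h.2 _ hmem) (not_le.mpr hlt2)

/-- Converse: variational inequality implies projection. -/
lemma isProj_of_vi {d : ℕ} {C : Set (ℝ × EuclideanSpace ℝ (Fin d))}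
    {z w : ℝ × EuclideanSpace ℝ (Fin d)} (hw : w ∈ C)
    (hvi : ∀ u ∈ C, ip (z - w) (u - w) ≤ 0) : IsProj C z w := by
  refine ⟨hw, fun u hu => ?_⟩
  have expand : sqDist u z = sqDist u w + sqDist w z + 2 * ip (u - w) (w - z) := by
    have hrw : u - z = (u - w) + (w - z) := by abel
    rw [sqDist_eq, sqDist_eq, sqDist_eq, hrw, ip_add_left, ip_add_right, ip_add_right,
      ip_comm (w - z) (u - w)]
    ring
  have h1 : 0 ≤ ip (u - w) (w - z) := by
    have := hvi u hu
    have heq : ip (u - w) (w - z) = -ip (z - w) (u - w) := by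
      rw [ip_comm, ← ip_neg_left, neg_sub]
    rw [heq]; linarith
  have h2 : 0 ≤ sqDist u w := sqDist_nonneg _ _
  linarith [expand.ge]

lemma convex_shiftedSOC (d : ℕ) (α c : ℝ) : Convex ℝ (shiftedSOC d α c) := by
  intro x hx y hy a b ha hb hab
  simp only [shiftedSOC, Set.mem_setOf_eq] at hx hy ⊢
  have h2 : (a • x + b • y).2 = a • x.2 + b • y.2 := rfl
  have h1 : (a • x + b • y).1 = a * x.1 + b * y.1 := rfl
  rw [h2, h1]
  have hn : ‖a • x.2 + b • y.2‖ ≤ a * ‖x.2‖ + b * ‖y.2‖ := by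
    calc ‖a • x.2 + b • y.2‖ ≤ ‖a • x.2‖ + ‖b • y.2‖ := norm_add_le _ _
    _ = a * ‖x.2‖ + b * ‖y.2‖ := by
        rw [norm_smul, norm_smul, Real.norm_eq_abs, Real.norm_eq_abs,
          abs_of_nonneg ha, abs_of_nonneg hb]
  have hxa : a * ‖x.2‖ ≤ a * (α * (x.1 - c)) := mul_le_mul_of_nonneg_left hx ha
  have hyb : b * ‖y.2‖ ≤ b * (α * (y.1 - c)) := mul_le_mul_of_nonneg_left hy hb
  have : a * (α * (x.1 - c)) + b * (α * (y.1 - c)) = α * ((a * x.1 + b * y.1) - c) := by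
    linear_combination (-(α*c)) * hab
  linarith

/-- The displacement `z - v` from a projection onto a shifted SOC lies in the
appropriate (anti)cone. -/
lemma normal_facts {d : ℕ} {α c : ℝ} (hα : α = 1 ∨ α = -1)
    {z v : ℝ × EuclideanSpace ℝ (Fin d)} (h : IsProj (shiftedSOC d α c) z v) :
    α * (z.1 - v.1) ≤ 0 ∧ ‖z.2 - v.2‖ ≤ -(α * (z.1 - v.1)) := by
  have hα2 : α * α = 1 := by rcases hα with h1 | h1 <;> rw [h1] <;> norm_num
  have hcvx := convex_shiftedSOC d α c
  have hvmem : ‖v.2‖ ≤ α * (v.1 - c) := h.1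
  -- generic test point
  have htest : ∀ y : EuclideanSpace ℝ (Fin d), ‖y‖ ≤ 1 →
      α * (z.1 - v.1) + (inner ℝ (z.2 - v.2) y : ℝ) ≤ 0 := by
    intro y hy
    have hmem : v + ((α, y) : ℝ × EuclideanSpace ℝ (Fin d)) ∈ shiftedSOC d α c := by
      simp only [shiftedSOC, Set.mem_setOf_eq]
      have h1 : (v + ((α, y) : ℝ × EuclideanSpace ℝ (Fin d))).1 = v.1 + α := rfl
      have h2 : (v + ((α, y) : ℝ × EuclideanSpace ℝ (Fin d))).2 = v.2 + y := rfl
      rw [h1, h2]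
      calc ‖v.2 + y‖ ≤ ‖v.2‖ + ‖y‖ := norm_add_le _ _
      _ ≤ α * (v.1 - c) + 1 := by linarith
      _ = α * (v.1 + α - c) := by nlinarith [hα2]
    have hvi := vi hcvx h hmem
    have hsub : (v + ((α, y) : ℝ × EuclideanSpace ℝ (Fin d))) - v
        = ((α, y) : ℝ × EuclideanSpace ℝ (Fin d)) := add_sub_cancel_left v _
    rw [hsub] at hvi
    have : ip (z - v) ((α, y) : ℝ × EuclideanSpace ℝ (Fin d))
        = (z - v).1 * α + (inner ℝ (z - v).2 y : ℝ) := rfl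
    rw [this] at hvi
    have hfst : (z - v).1 = z.1 - v.1 := rfl
    have hsnd : (z - v).2 = z.2 - v.2 := rfl
    rw [hfst, hsnd] at hvi
    linarith [hvi]
  have first : α * (z.1 - v.1) ≤ 0 := by
    have := htest 0 (by simp)
    simpa using this
  refine ⟨first, ?_⟩
  by_cases hb : z.2 - v.2 = 0
  · rw [hb]; simpa using first
  · have hnb : (0:ℝ) < ‖z.2 - v.2‖ := norm_pos_iff.mpr hb
    have := htest (‖z.2 - v.2‖⁻¹ • (z.2 - v.2)) (by
      rw [norm_smul, Real.norm_eq_abs, abs_of_nonneg (by positivity)]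
      rw [inv_mul_cancel₀ (ne_of_gt hnb)])
    rw [real_inner_smul_right, real_inner_self_eq_norm_sq] at this
    have hcalc : ‖z.2 - v.2‖⁻¹ * ‖z.2 - v.2‖ ^ 2 = ‖z.2 - v.2‖ := by
      field_simp
    rw [hcalc] at this
    linarith

end ProjAux

theorem proj_setD_eq_comp (d : ℕ) (zub zlb : ℝ) (h : zlb ≤ zub)
    (z v w : ℝ × EuclideanSpace ℝ (Fin d))
    (hv : IsProj (shiftedSOC d 1 zlb) z v)
    (hw : IsProj (shiftedSOC d (-1) zub) v w) :
    IsProj (setD d zub zlb) z w := by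
  classical
  open ProjAux in
  have cvxP : Convex ℝ (shiftedSOC d 1 zlb) := ProjAux.convex_shiftedSOC d 1 zlb
  have cvxM : Convex ℝ (shiftedSOC d (-1) zub) := ProjAux.convex_shiftedSOC d (-1) zub
  obtain ⟨ha1, ha2⟩ := ProjAux.normal_facts (Or.inl rfl) hv
  obtain ⟨hb1, hb2⟩ := ProjAux.normal_facts (Or.inr rfl) hw
  have hzv1 : z.1 - v.1 ≤ 0 := by linarith
  have hzv2 : ‖z.2 - v.2‖ ≤ -(z.1 - v.1) := by linarith
  have hp1 : 0 ≤ v.1 - w.1 := by linarith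
  have hp2 : ‖v.2 - w.2‖ ≤ v.1 - w.1 := by linarith
  have hvK : ‖v.2‖ ≤ v.1 - zlb := by
    have := hv.1; simp only [shiftedSOC, Set.mem_setOf_eq] at this; linarith
  have hwK : ‖w.2‖ ≤ zub - w.1 := by
    have := hw.1; simp only [shiftedSOC, Set.mem_setOf_eq] at this; linarith
  -- apex inequality for the projection onto K₋
  have hapex : (v.1 - w.1) * (zub - w.1) ≤ (inner ℝ (v.2 - w.2) w.2 : ℝ) := by
    have humem : ((zub, (0 : EuclideanSpace ℝ (Fin d))) : ℝ × EuclideanSpace ℝ (Fin d))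
        ∈ shiftedSOC d (-1) zub := by
      simp [shiftedSOC]
    have h0 := ProjAux.vi cvxM hw humem
    have heq : ProjAux.ip (v - w)
        (((zub, (0 : EuclideanSpace ℝ (Fin d))) : ℝ × EuclideanSpace ℝ (Fin d)) - w)
        = (v.1 - w.1) * (zub - w.1)
          + (inner ℝ (v.2 - w.2) ((0 : EuclideanSpace ℝ (Fin d)) - w.2) : ℝ) := rfl
    rw [heq, zero_sub, inner_neg_right] at h0
    linarith
  -- w belongs to K₊
  have hwplus : ‖w.2‖ ≤ w.1 - zlb := by
    rcases eq_or_lt_of_le (norm_nonneg w.2) with hr | hr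
    · -- ‖w.2‖ = 0
      have hw2 : w.2 = 0 := norm_eq_zero.mp hr.symm
      rw [hw2, norm_zero]
      by_contra hcon
      push_neg at hcon
      have humem : ((zlb, (0 : EuclideanSpace ℝ (Fin d))) : ℝ × EuclideanSpace ℝ (Fin d))
          ∈ shiftedSOC d (-1) zub := by
        simp only [shiftedSOC, Set.mem_setOf_eq]
        simp only [norm_zero]
        nlinarith
      have h0 := ProjAux.vi cvxM hw humem
      have heq : ProjAux.ip (v - w)
          (((zlb, (0 : EuclideanSpace ℝ (Fin d))) : ℝ × EuclideanSpace ℝ (Fin d)) - w)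
          = (v.1 - w.1) * (zlb - w.1)
            + (inner ℝ (v.2 - w.2) ((0 : EuclideanSpace ℝ (Fin d)) - w.2) : ℝ) := rfl
      rw [heq, hw2] at h0
      simp only [sub_zero, sub_self, inner_zero_right, add_zero] at h0
      nlinarith [h0, hcon, hvK, norm_nonneg v.2, hp1]
    · -- 0 < ‖w.2‖
      have hCS : (inner ℝ w.2 v.2 : ℝ) ≤ ‖w.2‖ * ‖v.2‖ := real_inner_le_norm _ _
      have hsq : ‖w.2‖ ^ 2 = (inner ℝ w.2 v.2 : ℝ) - (inner ℝ w.2 (v.2 - w.2) : ℝ) := by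
        rw [inner_sub_right, real_inner_self_eq_norm_sq]; ring
      have hcomm : (inner ℝ w.2 (v.2 - w.2) : ℝ) = (inner ℝ (v.2 - w.2) w.2 : ℝ) :=
        real_inner_comm _ _
      have key : ‖w.2‖ ^ 2 ≤ ‖w.2‖ * (w.1 - zlb) := by
        nlinarith [hsq, hcomm, hapex, hCS, hvK, hwK, hp1, norm_nonneg w.2, norm_nonneg v.2]
      nlinarith [key, hr]
  -- assemble
  have hwD : w ∈ setD d zub zlb := by
    refine ⟨hw.1, ?_⟩
    simp only [shiftedSOC, Set.mem_setOf_eq]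
    linarith
  refine ProjAux.isProj_of_vi hwD ?_
  intro u hu
  have h1 : ProjAux.ip (v - w) (u - w) ≤ 0 := ProjAux.vi cvxM hw hu.1
  have h2 : ProjAux.ip (z - v) (u - v) ≤ 0 := ProjAux.vi cvxP hv hu.2
  have h3 : ProjAux.ip (z - v) (v - w) ≤ 0 := by
    have heq : ProjAux.ip (z - v) (v - w)
        = (z.1 - v.1) * (v.1 - w.1) + (inner ℝ (z.2 - v.2) (v.2 - w.2) : ℝ) := rfl
    rw [heq]
    have hCS : (inner ℝ (z.2 - v.2) (v.2 - w.2) : ℝ) ≤ ‖z.2 - v.2‖ * ‖v.2 - w.2‖ :=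
      real_inner_le_norm _ _
    have hprod : ‖z.2 - v.2‖ * ‖v.2 - w.2‖ ≤ (-(z.1 - v.1)) * (v.1 - w.1) :=
      mul_le_mul hzv2 hp2 (norm_nonneg _) (by linarith)
    nlinarith
  have e1 : ProjAux.ip (z - w) (u - w)
      = ProjAux.ip (z - v) (u - w) + ProjAux.ip (v - w) (u - w) := by
    rw [← ProjAux.ip_add_left]; congr 1; abel
  have e2 : ProjAux.ip (z - v) (u - w)
      = ProjAux.ip (z - v) (u - v) + ProjAux.ip (z - v) (v - w) := by
    rw [← ProjAux.ip_add_right]; congr 1; abel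
  linarith
end

section
/- Suppose z = (z₀, z₁) ∈ K_{+1}(z̲) with ‖z₁‖ > z̄ - z₀ and ‖z₁‖ > z₀ - z̄, and z̲ ≤ z̄. Then the point w = ((z̄ - z₀ + ‖z₁‖)/2)·(-1, z₁/‖z₁‖) + (z̄, 0) belongs to K_{+1}(z̲). -/
/-! The point lies on the ray from `(z̄, 0)` in direction `(-1, z₁/‖z₁‖)`, so its second component
has norm at most the step length `t = (z̄ - z₀ + ‖z₁‖)/2`, which is nonnegative since
`z₀ - z̄ < ‖z₁‖`. Membership in `K₊₁(z̲)` then reads `2t ≤ z̄ - z̲`, i.e. `‖z₁‖ ≤ z₀ - z̲`,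
which is `z ∈ K₊₁(z̲)`. -/

theorem mem_shiftedSOC_one_iff {d : ℕ} {c : ℝ} {z : ℝ × EuclideanSpace ℝ (Fin d)} :
    z ∈ shiftedSOC d 1 c ↔ ‖z.2‖ ≤ z.1 - c := by
  rw [shiftedSOC, Set.mem_ofPred_eq, one_mul]

theorem norm_inv_norm_smul_le_one {E : Type*} [NormedAddCommGroup E] [NormedSpace ℝ E] (x : E) :
    ‖‖x‖⁻¹ • x‖ ≤ 1 := by
  rw [norm_smul, norm_inv, norm_norm]
  exact inv_mul_le_one_of_le₀ le_rfl (norm_nonneg x)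

theorem smul_neg_one_prod_add_mem_shiftedSOC_one {d : ℕ} {a c t : ℝ}
    {u : EuclideanSpace ℝ (Fin d)} (hu : ‖u‖ ≤ 1) (ht : 0 ≤ t) (hta : 2 * t ≤ a - c) :
    t • ((-1 : ℝ), u) + (a, (0 : EuclideanSpace ℝ (Fin d))) ∈ shiftedSOC d 1 c := by
  rw [mem_shiftedSOC_one_iff]
  calc ‖t • u + 0‖ = t * ‖u‖ := by rw [add_zero, norm_smul, Real.norm_of_nonneg ht]
    _ ≤ t := mul_le_of_le_one_right ht hu
    _ ≤ t • (-1 : ℝ) + a - c := by rw [smul_eq_mul]; linarith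

theorem case3_point_mem_Kplus_general (d : ℕ) (zub zlb : ℝ)
    (z : ℝ × EuclideanSpace ℝ (Fin d)) (hz : z ∈ shiftedSOC d 1 zlb)
    (h2 : z.1 - zub < ‖z.2‖) :
    ((zub - z.1 + ‖z.2‖) / 2) •
        (((-1 : ℝ), ‖z.2‖⁻¹ • z.2) : ℝ × EuclideanSpace ℝ (Fin d)) +
      ((zub, (0 : EuclideanSpace ℝ (Fin d))) : ℝ × EuclideanSpace ℝ (Fin d)) ∈
      shiftedSOC d 1 zlb := by
  have hz' := mem_shiftedSOC_one_iff.mp hz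
  exact smul_neg_one_prod_add_mem_shiftedSOC_one (norm_inv_norm_smul_le_one z.2)
    (by linarith) (by linarith)

theorem case3_point_mem_Kplus (d : ℕ) (zub zlb : ℝ) (h : zlb ≤ zub)
    (z : ℝ × EuclideanSpace ℝ (Fin d)) (hz : z ∈ shiftedSOC d 1 zlb)
    (h1 : zub - z.1 < ‖z.2‖) (h2 : z.1 - zub < ‖z.2‖) :
    ((zub - z.1 + ‖z.2‖) / 2) •
        (((-1 : ℝ), ‖z.2‖⁻¹ • z.2) : ℝ × EuclideanSpace ℝ (Fin d)) +
      ((zub, (0 : EuclideanSpace ℝ (Fin d))) : ℝ × EuclideanSpace ℝ (Fin d)) ∈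
      shiftedSOC d 1 zlb :=
  case3_point_mem_Kplus_general d zub zlb z hz h2
end

section
/- If z = (z₀, z₁) satisfies ‖z₁‖ ≤ z₀ - z̲ (i.e., z ∈ K_{+1}(z̲)) and z̲ ≤ z̄, and the projection of z onto K_{-1}(z̄) equals z (i.e., z ∈ K_{-1}(z̄)), then z is the projection of z onto D(z̄, z̲); in general, for z ∈ K_{+1}(z̲), P_{D(z̄,z̲)}(z) = P_{K_{-1}(z̄)}(z). -/
open scoped RealInnerProductSpace in
theorem proj_setD_of_mem_Kplus (d : ℕ) (zub zlb : ℝ) (h : zlb ≤ zub)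
    (z : ℝ × EuclideanSpace ℝ (Fin d)) (hz : z ∈ shiftedSOC d 1 zlb) :
    ∀ w : ℝ × EuclideanSpace ℝ (Fin d),
      IsProj (shiftedSOC d (-1) zub) z w → IsProj (setD d zub zlb) z w := by
  intro w hw
  obtain ⟨hwK, hmin⟩ := hw
  have hz' : ‖z.2‖ ≤ 1 * (z.1 - zlb) := hz
  have hwK' : ‖w.2‖ ≤ -1 * (w.1 - zub) := hwK
  have ha : ‖z.2‖ ≤ z.1 - zlb := by linarith
  have ha0 : (0:ℝ) ≤ z.1 - zlb := le_trans (norm_nonneg _) ha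
  have hp0 : (inner ℝ w.2 z.2 : ℝ) ≤ ‖w.2‖ * ‖z.2‖ := real_inner_le_norm _ _
  have hr0 : (0:ℝ) ≤ ‖w.2‖ := norm_nonneg _
  have hp : (inner ℝ w.2 z.2 : ℝ) ≤ ‖w.2‖ * (z.1 - zlb) := by
    calc (inner ℝ w.2 z.2 : ℝ) ≤ ‖w.2‖ * ‖z.2‖ := hp0
    _ ≤ ‖w.2‖ * (z.1 - zlb) := by
        exact mul_le_mul_of_nonneg_left ha hr0
  have hwP : w ∈ shiftedSOC d 1 zlb := by
    by_contra hcon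
    have hcon' : 1 * (w.1 - zlb) < ‖w.2‖ := not_le.mp hcon
    set s : ℝ := w.1 - zlb with hs
    set r : ℝ := ‖w.2‖ with hr
    have hrs : s < r := by linarith
    set a : ℝ := z.1 - zlb with hadef
    set p : ℝ := (inner ℝ w.2 z.2 : ℝ) with hpdef
    rcases le_or_gt r (-s) with hA | hB
    · -- Case A: project w to the apex (zlb, 0)
      have hw' : ((zlb, (0:EuclideanSpace ℝ (Fin d))) : ℝ × EuclideanSpace ℝ (Fin d))
          ∈ shiftedSOC d (-1) zub := by
        show ‖(0:EuclideanSpace ℝ (Fin d))‖ ≤ -1 * (zlb - zub)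
        simp
        linarith
      have hm := hmin _ hw'
      unfold sqDist at hm
      simp only at hm
      have e1 : ‖w.2 - z.2‖ ^ 2 = r ^ 2 - 2 * p + ‖z.2‖ ^ 2 := by
        rw [hr, hpdef, @norm_sub_sq_real]
      have e2 : ‖(0:EuclideanSpace ℝ (Fin d)) - z.2‖ ^ 2 = ‖z.2‖ ^ 2 := by
        rw [zero_sub, norm_neg]
      rw [e1, e2] at hm
      -- hm : (w.1 - z.1)^2 + (r^2 - 2p + ‖z.2‖^2) ≤ (zlb - z.1)^2 + ‖z.2‖^2
      have hw1 : w.1 - z.1 = s - a := by rw [hs, hadef]; ring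
      have hz1 : zlb - z.1 = -a := by rw [hadef]; ring
      rw [hw1, hz1] at hm
      -- contradiction: (s-a)^2 + r^2 - 2p ≤ a^2, but p ≤ r*a and s + r ≤ 0, a ≥ 0
      nlinarith [hp, mul_nonneg ha0 (by linarith : (0:ℝ) ≤ -(s+r)), sq_nonneg (s - r), sq_nonneg (s + r)]
    · -- Case B: project w onto the boundary of K₊
      have hr0' : (0:ℝ) < r := by linarith
      set t : ℝ := (s + r) / 2 with ht
      have ht0 : 0 ≤ t := by rw [ht]; linarith
      have htr : t ≤ r := by rw [ht]; linarith
      set lam : ℝ := t / r with hlam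
      have hlr : lam * r = t := div_mul_cancel₀ t (ne_of_gt hr0')
      have hlam0 : 0 ≤ lam := div_nonneg ht0 (le_of_lt hr0')
      have hlam1 : lam ≤ 1 := by
        rw [hlam, div_le_one hr0']; exact htr
      have hnorm : ‖lam • w.2‖ = t := by
        rw [norm_smul, Real.norm_eq_abs, abs_of_nonneg hlam0, ← hr, hlr]
      have hw' : ((zlb + t, lam • w.2) : ℝ × EuclideanSpace ℝ (Fin d))
          ∈ shiftedSOC d (-1) zub := by
        show ‖lam • w.2‖ ≤ -1 * (zlb + t - zub)
        rw [hnorm]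
        have : r ≤ -1 * (w.1 - zub) := hwK'
        rw [ht]
        -- need (s+r)/2 ≤ zub - zlb - (s+r)/2, i.e. s + r ≤ zub - zlb
        have hsr : s + r ≤ zub - zlb := by
          have : r ≤ zub - w.1 := by linarith
          rw [hs]; linarith
        linarith
      have hm := hmin _ hw'
      unfold sqDist at hm
      simp only at hm
      have e1 : ‖w.2 - z.2‖ ^ 2 = r ^ 2 - 2 * p + ‖z.2‖ ^ 2 := by
        rw [hr, hpdef, @norm_sub_sq_real]
      have e2 : ‖lam • w.2 - z.2‖ ^ 2 = t ^ 2 - 2 * (lam * p) + ‖z.2‖ ^ 2 := by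
        rw [@norm_sub_sq_real, hnorm, real_inner_smul_left, hpdef]
      rw [e1, e2] at hm
      have hw1 : w.1 - z.1 = s - a := by rw [hs, hadef]; ring
      have hz1 : zlb + t - z.1 = t - a := by rw [hadef]; ring
      rw [hw1, hz1] at hm
      -- key fact : p - lam * p ≤ r * a - t * a
      have hfact : p - lam * p ≤ r * a - t * a := by
        have h1 : (1 - lam) * p ≤ (1 - lam) * (r * a) :=
          mul_le_mul_of_nonneg_left hp (by linarith)
        have h2 : (1 - lam) * (r * a) = r * a - t * a := by
          linear_combination (-a) * hlr
        calc p - lam * p = (1 - lam) * p := by ring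
          _ ≤ (1 - lam) * (r * a) := h1
          _ = r * a - t * a := h2
      -- hm : (s-a)^2 + (r^2 - 2p + n) ≤ (t-a)^2 + (t^2 - 2 lam p + n)
      -- but LHS - RHS ≥ (s-r)^2/2 > 0 since 2t = s + r
      rw [ht] at hm hfact
      nlinarith [hm, hfact, mul_pos (sub_pos.mpr hrs) (sub_pos.mpr hrs)]
  exact ⟨⟨hwK, hwP⟩, fun v hv => hmin v hv.1⟩
end

section
/- The Euclidean projection onto the shifted second order cone K_α(c) is given by the piecewise formula: P(z) = z if ‖z₁‖ ≤ α(z₀ - c); P(z) = (c, 0) if ‖z₁‖ ≤ -α(z₀ - c); and P(z) = (τα + c, τ z₁/‖z₁‖) otherwise, where τ = (α(z₀ - c) + ‖z₁‖)/2. -/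
/-!
Write `t = α (z₀ - c)` and `r = ‖z₁‖`. Since `α² = 1`, every `w ∈ K_α(c)` satisfies
`sqDist w z ≥ (u - t)² + (s - r)²` with `u = α (w₀ - c)`, `s = ‖w₁‖` and `0 ≤ s ≤ u`, while each
candidate projection attains this bound for its own `(u, s)`. So the problem reduces to the projection
of `(t, r)` onto the planar cone `{0 ≤ s ≤ u}`: the point itself, the apex, or the foot
`((t + r) / 2, (t + r) / 2)` on the ray `s = u`.
-/

theorem sq_norm_sub_norm_le {E : Type*} [SeminormedAddCommGroup E] (a b : E) :
    (‖a‖ - ‖b‖) ^ 2 ≤ ‖a - b‖ ^ 2 :=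
  sq_le_sq.2 ((abs_norm_sub_norm_le a b).trans (le_abs_self _))

theorem norm_div_norm_smul {E : Type*} [NormedAddCommGroup E] [NormedSpace ℝ E] {x : E}
    (hx : x ≠ 0) {a : ℝ} (ha : 0 ≤ a) : ‖(a / ‖x‖) • x‖ = a := by
  rw [norm_smul, Real.norm_of_nonneg (div_nonneg ha (norm_nonneg x)),
    div_mul_cancel₀ a (norm_ne_zero_iff.2 hx)]

theorem norm_div_norm_smul_sub_self {E : Type*} [NormedAddCommGroup E] [NormedSpace ℝ E]
    {x : E} (hx : x ≠ 0) (a : ℝ) : ‖(a / ‖x‖) • x - x‖ = |a - ‖x‖| := by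
  calc ‖(a / ‖x‖) • x - x‖ = ‖(a / ‖x‖ - 1) • x‖ := by rw [sub_smul, one_smul]
    _ = |a - ‖x‖| := by
        rw [norm_smul, Real.norm_eq_abs, ← abs_norm x, ← abs_mul, abs_norm, sub_mul,
          div_mul_cancel₀ a (norm_ne_zero_iff.2 hx), one_mul]

theorem sq_mul_sub_mul_of_sq_eq_one {α : ℝ} (hα : α ^ 2 = 1) (a b : ℝ) :
    (α * a - α * b) ^ 2 = (a - b) ^ 2 := by
  linear_combination (a - b) ^ 2 * hα

theorem sq_add_sq_le_of_le_neg {t r u s : ℝ} (hr : 0 ≤ r) (hs : 0 ≤ s) (hsu : s ≤ u)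
    (htr : t ≤ -r) : t ^ 2 + r ^ 2 ≤ (u - t) ^ 2 + (s - r) ^ 2 := by
  nlinarith [mul_nonneg (hs.trans hsu) (by linarith : 0 ≤ -t - r),
    mul_nonneg (by linarith : 0 ≤ u - s) hr]

theorem sq_sub_div_two_le {t r u s : ℝ} (hsu : s ≤ u) (htr : t ≤ r) :
    (r - t) ^ 2 / 2 ≤ (u - t) ^ 2 + (s - r) ^ 2 := by
  nlinarith [sq_nonneg (u - t + s - r),
    mul_nonneg (by linarith : 0 ≤ u - s) (by linarith : 0 ≤ r - t)]

theorem isProj_self {d : ℕ} {C : Set (ℝ × EuclideanSpace ℝ (Fin d))}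
    {z : ℝ × EuclideanSpace ℝ (Fin d)} (hz : z ∈ C) : IsProj C z z :=
  ⟨hz, fun w _ => by simp [sqDist]; positivity⟩

section shiftedSOC

variable {d : ℕ} {α c : ℝ}

theorem planar_le_sqDist (hα : α ^ 2 = 1) (w z : ℝ × EuclideanSpace ℝ (Fin d)) :
    (α * (w.1 - c) - α * (z.1 - c)) ^ 2 + (‖w.2‖ - ‖z.2‖) ^ 2 ≤ sqDist w z := by
  rw [sq_mul_sub_mul_of_sq_eq_one hα, sub_sub_sub_cancel_right]
  exact add_le_add le_rfl (sq_norm_sub_norm_le w.2 z.2)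

theorem isProj_shiftedSOC_of_le_planar (hα : α ^ 2 = 1) {z v : ℝ × EuclideanSpace ℝ (Fin d)}
    (hv : v ∈ shiftedSOC d α c)
    (hle : ∀ u s : ℝ, 0 ≤ s → s ≤ u →
      sqDist v z ≤ (u - α * (z.1 - c)) ^ 2 + (s - ‖z.2‖) ^ 2) :
    IsProj (shiftedSOC d α c) z v :=
  ⟨hv, fun w hw => (hle _ _ (norm_nonneg w.2) hw).trans (planar_le_sqDist hα w z)⟩

end shiftedSOC

theorem proj_shiftedSOC_formula (d : ℕ) (α c : ℝ) (hα : α = 1 ∨ α = -1)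
    (z₀ : ℝ) (z₁ : EuclideanSpace ℝ (Fin d)) :
    (‖z₁‖ ≤ α * (z₀ - c) → IsProj (shiftedSOC d α c) (z₀, z₁) (z₀, z₁)) ∧
    (‖z₁‖ ≤ -α * (z₀ - c) →
      IsProj (shiftedSOC d α c) (z₀, z₁) (c, (0 : EuclideanSpace ℝ (Fin d)))) ∧
    (α * (z₀ - c) < ‖z₁‖ → -α * (z₀ - c) < ‖z₁‖ →
      IsProj (shiftedSOC d α c) (z₀, z₁)
        ((α * (z₀ - c) + ‖z₁‖) / 2 * α + c,
          ((α * (z₀ - c) + ‖z₁‖) / 2 / ‖z₁‖) • z₁)) := by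
  have hα2 : α ^ 2 = 1 := by rcases hα with rfl | rfl <;> norm_num
  refine ⟨fun hin => isProj_self hin, fun hpolar => ?_, fun hnotin hnotpolar => ?_⟩
  · refine isProj_shiftedSOC_of_le_planar hα2 (by simp [shiftedSOC]) fun u s hs hsu => ?_
    have hdist : sqDist (c, (0 : EuclideanSpace ℝ (Fin d))) (z₀, z₁)
        = (α * (z₀ - c)) ^ 2 + ‖z₁‖ ^ 2 := by
      simp only [sqDist, zero_sub, norm_neg]
      linear_combination -(z₀ - c) ^ 2 * hα2
    exact hdist.le.trans (sq_add_sq_le_of_le_neg (norm_nonneg z₁) hs hsu (by linarith))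
  · set t := α * (z₀ - c) with ht
    set τ := (t + ‖z₁‖) / 2
    have hz₁ : z₁ ≠ 0 := by
      rintro rfl
      simp only [norm_zero] at hnotin hnotpolar
      linarith
    have hτ : 0 ≤ τ := div_nonneg (by linarith) zero_le_two
    refine isProj_shiftedSOC_of_le_planar hα2 ?_ fun u s _ hsu => ?_
    · change ‖(τ / ‖z₁‖) • z₁‖ ≤ α * (τ * α + c - c)
      rw [norm_div_norm_smul hz₁ hτ]
      linear_combination (-τ) * hα2
    · have hdist : sqDist (τ * α + c, (τ / ‖z₁‖) • z₁) (z₀, z₁) = (‖z₁‖ - t) ^ 2 / 2 := by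
        simp only [sqDist, norm_div_norm_smul_sub_self hz₁, sq_abs]
        linear_combination (τ - (z₀ - c)) * (τ + z₀ - c) * hα2
      exact hdist.le.trans (sq_sub_div_two_le hsu hnotin.le)
end
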